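/- arXiv:2402.01407 — 4 statements merged into one kernel-verified Lean document; each statement's English description precedes it below -/
import Mathlib

section
/- For every n ≥ 1, the Kronecker product of the (2n+1)-gonal prism with K₂ is isomorphic to the (4n+2)-gonal prism. -/
open SimpleGraph

/-- The Kronecker (tensor/direct) product of two simple graphs. -/
def tensorProd {α β : Type*} (G : SimpleGraph α) (H : SimpleGraph β) :
    SimpleGraph (α × β) where
  Adj a b := G.Adj a.1 b.1 ∧ H.Adj a.2 b.2
  symm := ⟨fun _ _ h => ⟨h.1.symm, h.2.symm⟩⟩
  loopless := ⟨fun a h => G.loopless.irrefl a.1 h.1⟩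

/-- The complete graph on two vertices. -/
def K2 : SimpleGraph (Fin 2) := ⊤

private lemma cycle_adj_val {m : ℕ} (hm : 2 ≤ m) (u v : Fin m) :
    (cycleGraph m).Adj u v ↔
      (u.val + 1 = v.val ∨ v.val + 1 = u.val ∨
       (u.val = 0 ∧ v.val + 1 = m) ∨ (v.val = 0 ∧ u.val + 1 = m)) := by
  obtain ⟨j, rfl⟩ : ∃ j, m = j + 2 := ⟨m - 2, by omega⟩
  rw [cycleGraph_adj]
  have hu := u.isLt
  have hv := v.isLt
  have h1 : ((1 : Fin (j + 2))).val = 1 := rfl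
  have key : ∀ a b : Fin (j + 2), (a - b = 1) ↔ ((j + 2 - b.val + a.val) % (j + 2) = 1) := by
    intro a b
    rw [Fin.ext_iff, Fin.sub_def, h1]
  rw [key, key]
  have m1 : ∀ X : ℕ, X < 2 * (j + 2) →
      (X < j + 2 ∧ X % (j + 2) = X) ∨ (j + 2 ≤ X ∧ X % (j + 2) = X - (j + 2)) := by
    intro X hX
    rcases lt_or_ge X (j + 2) with h | h
    · exact Or.inl ⟨h, Nat.mod_eq_of_lt h⟩
    · exact Or.inr ⟨h, by rw [Nat.mod_eq_sub_mod h, Nat.mod_eq_of_lt (by omega)]⟩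
  have hlt1 : (j + 2 - v.val + u.val) % (j + 2) < j + 2 := Nat.mod_lt _ (by omega)
  have hlt2 : (j + 2 - u.val + v.val) % (j + 2) < j + 2 := Nat.mod_lt _ (by omega)
  rcases m1 (j + 2 - v.val + u.val) (by omega) with ⟨hb, h⟩ | ⟨hb, h⟩ <;>
    rcases m1 (j + 2 - u.val + v.val) (by omega) with ⟨hb', h'⟩ | ⟨hb', h'⟩ <;>
    rw [h, h'] <;> omega

/-- For every `n ≥ 1`, the Kronecker product of the `(2n+1)`-gonal prism with
`K₂` is isomorphic to the `(4n+2)`-gonal prism. -/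
theorem stmt14 (n : ℕ) (hn : 1 ≤ n) :
    Nonempty (tensorProd ((SimpleGraph.cycleGraph (2 * n + 1)).boxProd K2) K2 ≃g
      (SimpleGraph.cycleGraph (4 * n + 2)).boxProd K2) := by
  have hlt : ∀ (a e : ℕ), a < 2 * n + 1 → a + (2 * n + 1) * (e % 2) < 4 * n + 2 := by
    intro a e ha
    rcases Nat.mod_two_eq_zero_or_one e with h | h <;> rw [h] <;> omega
  refine ⟨⟨⟨fun p => (⟨p.1.1.val + (2 * n + 1) * ((p.1.1.val + p.1.2.val + p.2.val) % 2),
      hlt _ _ p.1.1.isLt⟩, p.1.2),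
    fun q => ((⟨q.1.val % (2 * n + 1), Nat.mod_lt _ (by omega)⟩, q.2),
      ⟨(q.1.val + q.2.val) % 2, Nat.mod_lt _ (by omega)⟩), ?_, ?_⟩, ?_⟩⟩
  · rintro ⟨⟨a, s⟩, t⟩
    have ha := a.isLt
    have hs := s.isLt
    have ht := t.isLt
    ext <;> simp only
    · rcases Nat.mod_two_eq_zero_or_one (a.val + s.val + t.val) with h | h <;> rw [h]
      · simp only [Nat.mul_zero, Nat.add_zero]
        exact Nat.mod_eq_of_lt ha
      · rw [mul_one, Nat.add_mod_right, Nat.mod_eq_of_lt ha]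
    · rcases Nat.mod_two_eq_zero_or_one (a.val + s.val + t.val) with h | h <;> rw [h] <;> omega
  · rintro ⟨x, u⟩
    have hx := x.isLt
    have hu := u.isLt
    have hmod : x.val % (2 * n + 1) = x.val ∨
        (x.val % (2 * n + 1) = x.val - (2 * n + 1) ∧ 2 * n + 1 ≤ x.val) := by
      rcases lt_or_ge x.val (2 * n + 1) with h | h
      · exact Or.inl (Nat.mod_eq_of_lt h)
      · exact Or.inr ⟨by rw [Nat.mod_eq_sub_mod h, Nat.mod_eq_of_lt (by omega)], h⟩
    ext <;> simp only
    · rcases Nat.mod_two_eq_zero_or_one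
        (x.val % (2 * n + 1) + u.val + (x.val + u.val) % 2) with h | h <;> rw [h] <;> omega
  · rintro ⟨⟨a, s⟩, t⟩ ⟨⟨b, s'⟩, t'⟩
    have ha := a.isLt; have hb := b.isLt
    have hs := s.isLt; have hs' := s'.isLt
    have ht := t.isLt; have ht' := t'.isLt
    simp only [RelIso.coe_fn_mk, Equiv.coe_fn_mk, tensorProd, boxProd_adj, K2, top_adj,
      cycle_adj_val (show 2 ≤ 2 * n + 1 by omega), cycle_adj_val (show 2 ≤ 4 * n + 2 by omega),
      Prod.mk.injEq, Fin.ext_iff, ne_eq, Fin.val_fin_lt]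
    rcases Nat.mod_two_eq_zero_or_one (a.val + s.val + t.val) with h | h <;>
      rcases Nat.mod_two_eq_zero_or_one (b.val + s'.val + t'.val) with h' | h' <;>
      rw [h, h'] <;> omega
end

section
/- If G = H ∧ P₃ is 3-connected, where P₃ is the path on three vertices, then H contains at least two odd cycles. -/
open SimpleGraph

/-- A graph is `k`-connected if it has more than `k` vertices and removing any
fewer than `k` vertices leaves a connected graph. -/
def KConnected (k : ℕ) {V : Type*} [Fintype V] (G : SimpleGraph V) : Prop :=
  k < Fintype.card V ∧
    ∀ s : Finset V, s.card < k → (G.induce ((↑s : Set V)ᶜ)).Connected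

/-- The path on three vertices. -/
def P3 : SimpleGraph (Fin 3) := SimpleGraph.pathGraph 3

section Aux

variable {α : Type*} {G : SimpleGraph α}

/-- A path from `v` to `u` containing the edge `s(u,v)` has length 1. -/
lemma path_edge_len : ∀ {v u : α} (p : G.Walk v u), p.IsPath → s(u, v) ∈ p.edges →
    p.length = 1 := by
  intro v u p
  induction p with
  | nil => intro _ he; simp at he
  | @cons v y u h₂ p₂ ih =>
    intro hp he
    rw [SimpleGraph.Walk.cons_isPath_iff] at hp
    rw [SimpleGraph.Walk.edges_cons, List.mem_cons] at he
    rcases he with he | he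
    · rw [Sym2.eq_iff] at he
      rcases he with ⟨h1, h2⟩ | ⟨h1, -⟩
      · exfalso; subst h1; subst h2; exact G.loopless.irrefl _ h₂
      · subst h1
        cases p₂ with
        | nil => simp
        | cons h₃ p₃ =>
          exfalso
          rw [SimpleGraph.Walk.cons_isPath_iff] at hp
          exact hp.1.2 (SimpleGraph.Walk.end_mem_support p₃)
    · exact absurd (SimpleGraph.Walk.snd_mem_support_of_mem_edges p₂ he) hp.2

/-- An odd closed walk contains an odd cycle. -/
lemma oddClosedWalk_oddCycle :
    ∀ n, Odd n → ∀ (u : α) (w : G.Walk u u), w.length = n →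
      ∃ (x : α) (c : G.Walk x x), c.IsCycle ∧ Odd c.length := by
  classical
  intro n
  induction n using Nat.strong_induction_on with
  | _ n ih =>
    intro hodd u w hlen
    cases w with
    | nil =>
      simp only [SimpleGraph.Walk.length_nil] at hlen
      rw [Nat.odd_iff] at hodd; omega
    | @cons _ v _ h w' =>
      rw [SimpleGraph.Walk.length_cons] at hlen
      by_cases hnd : w'.support.Nodup
      · have hp : w'.IsPath := (SimpleGraph.Walk.isPath_def w').mpr hnd
        by_cases he : s(u, v) ∈ w'.edges
        · exfalso
          have := path_edge_len w' hp he
          rw [Nat.odd_iff] at hodd; omega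
        · exact ⟨u, Walk.cons h w',
            (SimpleGraph.Walk.cons_isCycle_iff w' h).mpr ⟨hp, he⟩,
            by rw [SimpleGraph.Walk.length_cons, hlen]; exact hodd⟩
      · obtain ⟨x, hdup⟩ := List.exists_duplicate_iff_not_nodup.mpr hnd
        have hcount : 2 ≤ w'.support.count x := List.duplicate_iff_two_le_count.mp hdup
        have hx : x ∈ w'.support := hdup.mem
        have hspec := w'.take_spec hx
        have hcount_t := w'.count_support_takeUntil_eq_one hx
        have hsup : w'.support =
            (w'.takeUntil x hx).support ++ (w'.dropUntil x hx).support.tail := by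
          conv_lhs => rw [← hspec]
          exact SimpleGraph.Walk.support_append _ _
        have hxd : x ∈ (w'.dropUntil x hx).support.tail := by
          by_contra hxd
          have h0 : (w'.dropUntil x hx).support.tail.count x = 0 :=
            List.count_eq_zero_of_not_mem hxd
          rw [hsup, List.count_append, hcount_t, h0] at hcount
          omega
        have hlen1 : (w'.takeUntil x hx).length + (w'.dropUntil x hx).length = w'.length := by
          conv_rhs => rw [← hspec]
          exact (SimpleGraph.Walk.length_append _ _).symm
        have hdnn : ¬ (w'.dropUntil x hx).Nil := by
          intro hnil
          rw [SimpleGraph.Walk.nil_iff_length_eq] at hnil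
          have hsl := SimpleGraph.Walk.length_support (w'.dropUntil x hx)
          have : (w'.dropUntil x hx).support.tail.length =
              (w'.dropUntil x hx).support.length - 1 := List.length_tail
          have hne : (w'.dropUntil x hx).support.tail ≠ [] := List.ne_nil_of_mem hxd
          have := List.length_pos_iff.mpr hne
          omega
        obtain ⟨y, h₃, d'', hcons⟩ := SimpleGraph.Walk.not_nil_iff.mp hdnn
        rw [hcons] at hxd
        have hxd'' : x ∈ d''.support := by
          rwa [SimpleGraph.Walk.support_cons, List.tail_cons] at hxd
        have hspec₂ := d''.take_spec hxd''
        have hlen2 : (d''.takeUntil x hxd'').length + (d''.dropUntil x hxd'').length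
            = d''.length := by
          conv_rhs => rw [← hspec₂]
          exact (SimpleGraph.Walk.length_append _ _).symm
        have hlen3 : (w'.dropUntil x hx).length = d''.length + 1 := by
          rw [hcons, SimpleGraph.Walk.length_cons]
        set c1 : G.Walk x x := Walk.cons h₃ (d''.takeUntil x hxd'') with hc1
        set c2 : G.Walk u u :=
          Walk.cons h ((w'.takeUntil x hx).append (d''.dropUntil x hxd'')) with hc2
        have hl1 : c1.length = (d''.takeUntil x hxd'').length + 1 :=
          SimpleGraph.Walk.length_cons _ _
        have hl2 : c2.length =
            (w'.takeUntil x hx).length + (d''.dropUntil x hxd'').length + 1 := by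
          rw [hc2, SimpleGraph.Walk.length_cons, SimpleGraph.Walk.length_append]
        rcases Nat.even_or_odd c1.length with hev | hod
        · have hod2 : Odd c2.length := by
            rw [Nat.odd_iff] at hodd ⊢
            rw [Nat.even_iff] at hev
            omega
          exact ih c2.length (by omega) hod2 u c2 rfl
        · exact ih c1.length (by omega) hod x c1 rfl

/-- Extract a walk in the ambient graph avoiding a forbidden finite set of vertices
from connectivity of the induced graph on the complement. -/
lemma get_walk {W : Type*} {G : SimpleGraph W} {s : Finset W}
    (hc : (G.induce ((↑s : Set W)ᶜ)).Connected) {p q : W} (hp : p ∉ s) (hq : q ∉ s) :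
    ∃ w : G.Walk p q, ∀ r ∈ w.support, r ∉ s := by
  have hp' : p ∈ ((↑s : Set W)ᶜ) := by simpa using hp
  have hq' : q ∈ ((↑s : Set W)ᶜ) := by simpa using hq
  obtain ⟨w0⟩ := hc.preconnected ⟨p, hp'⟩ ⟨q, hq'⟩
  refine ⟨w0.map (SimpleGraph.Embedding.induce _).toHom, ?_⟩
  intro r hr
  replace hr : r ∈ (w0.map (SimpleGraph.Embedding.induce ((↑s : Set W)ᶜ)).toHom).support := hr
  rw [SimpleGraph.Walk.support_map, List.mem_map] at hr
  obtain ⟨r₀, -, hr₀⟩ := hr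
  have := r₀.2
  rw [Set.mem_compl_iff] at this
  intro hmem
  subst hr₀
  exact this hmem

end Aux

section Tensor

variable {V : Type*} {H : SimpleGraph V}

lemma P3_adj_iff {a b : Fin 3} (h : P3.Adj a b) : (a = 1 ↔ ¬ b = 1) := by
  have h' := pathGraph_adj.mp h
  have ha := a.isLt
  have hb := b.isLt
  simp only [Fin.ext_iff, Fin.val_one]
  omega

lemma P3_adj_one {a b : Fin 3} (h : P3.Adj a b) : a = 1 ∨ b = 1 := by
  have h' := pathGraph_adj.mp h
  have ha := a.isLt
  have hb := b.isLt
  simp only [Fin.ext_iff, Fin.val_one]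
  omega

/-- Projection onto the first factor. -/
def fstHom (H : SimpleGraph V) : tensorProd H P3 →g H :=
  ⟨Prod.fst, fun ha => And.left ha⟩

lemma tensor_parity : ∀ {p q : V × Fin 3} (w : (tensorProd H P3).Walk p q),
    ((p.2 = 1) ↔ (q.2 = 1)) ↔ Even w.length := by
  intro p q w
  induction w with
  | nil => simp
  | @cons p r q ha w ih =>
    have h1 := P3_adj_iff (And.right ha)
    rw [SimpleGraph.Walk.length_cons, Nat.even_add_one, ← ih]
    tauto

lemma tensor_avoid (u v : V) : ∀ {p q : V × Fin 3} (w : (tensorProd H P3).Walk p q),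
    (∀ r ∈ w.support, r ≠ (u, 1) ∧ r ≠ (v, 1)) →
    ∃ w' : (H.deleteEdges {s(u, v)}).Walk p.1 q.1, w'.length = w.length := by
  intro p q w
  induction w with
  | nil => exact fun _ => ⟨Walk.nil, rfl⟩
  | @cons p r q ha w ih =>
    intro hs
    have hadj : (H.deleteEdges {s(u, v)}).Adj p.1 r.1 := by
      rw [SimpleGraph.deleteEdges_adj]
      refine ⟨And.left ha, ?_⟩
      rw [Set.mem_singleton_iff, Sym2.eq_iff]
      rcases P3_adj_one (And.right ha) with h1 | h1
      · have hpne := hs p (SimpleGraph.Walk.start_mem_support _)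
        have hpu : p.1 ≠ u := fun hh => hpne.1 (Prod.ext hh h1)
        have hpv : p.1 ≠ v := fun hh => hpne.2 (Prod.ext hh h1)
        rintro (⟨h2, -⟩ | ⟨h2, -⟩)
        · exact hpu h2
        · exact hpv h2
      · have hrne := hs r (by rw [SimpleGraph.Walk.support_cons]; exact List.mem_cons_of_mem _ (SimpleGraph.Walk.start_mem_support _))
        have hru : r.1 ≠ u := fun hh => hrne.1 (Prod.ext hh h1)
        have hrv : r.1 ≠ v := fun hh => hrne.2 (Prod.ext hh h1)
        rintro (⟨-, h2⟩ | ⟨-, h2⟩)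
        · exact hrv h2
        · exact hru h2
    obtain ⟨w', hw'⟩ := ih (fun z hz => hs z (by rw [SimpleGraph.Walk.support_cons]; exact List.mem_cons_of_mem _ hz))
    exact ⟨Walk.cons hadj w', by rw [SimpleGraph.Walk.length_cons, SimpleGraph.Walk.length_cons, hw']⟩

end Tensor

/-- If `H ∧ P₃` is 3-connected, then `H` contains at least two odd cycles. -/
theorem stmt15 {V : Type*} [Fintype V] (H : SimpleGraph V)
    (h3 : KConnected 3 (tensorProd H P3)) :
    ∃ (u u' : V) (c : H.Walk u u) (c' : H.Walk u' u'),
      c.IsCycle ∧ c'.IsCycle ∧ Odd c.length ∧ Odd c'.length ∧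
      {e | e ∈ c.edges} ≠ {e | e ∈ c'.edges} := by
  classical
  obtain ⟨hcard, hconn⟩ := h3
  rw [Fintype.card_prod, Fintype.card_fin] at hcard
  have hV : Nonempty V := by
    rw [← Fintype.card_pos_iff]; omega
  obtain ⟨a⟩ := hV
  -- Step 1: the product is connected, giving an odd closed walk in H
  have hc0 := hconn ∅ (by simp)
  obtain ⟨w0, -⟩ := get_walk hc0 (p := (a, 0)) (q := (a, 1))
    (by simp) (by simp)
  have hodd0 : Odd w0.length := by
    rw [← Nat.not_even_iff_odd]
    intro hev
    have := (tensor_parity w0).mpr hev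
    simp at this
  have hwalen : (w0.map (fstHom H)).length = w0.length := by
    rw [SimpleGraph.Walk.length_map]
  obtain ⟨x, c, hc, hcodd⟩ :=
    oddClosedWalk_oddCycle w0.length hodd0 a (w0.map (fstHom H)) hwalen
  -- Pick an edge of the cycle c
  have h3l := hc.three_le_length
  have hel : c.edges ≠ [] := by
    intro hnil
    have := c.length_edges
    rw [hnil] at this
    simp at this
    omega
  obtain ⟨e, he⟩ := List.exists_mem_of_ne_nil _ hel
  obtain ⟨u', v', he⟩ : ∃ u' v', s(u', v') ∈ c.edges := by
    revert he
    induction e using Sym2.ind with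
    | _ a b => exact fun he => ⟨a, b, he⟩
  have hadj : H.Adj u' v' := c.adj_of_mem_edges he
  have hne : u' ≠ v' := hadj.ne
  -- |V| ≥ 3
  have hcard3 : 3 ≤ Fintype.card V := by
    have hnd : c.support.tail.Nodup := hc.support_nodup
    have hle := hnd.length_le_card
    have hsl := c.length_support
    have htl : c.support.tail.length = c.support.length - 1 := List.length_tail
    omega
  obtain ⟨b, hbu, hbv⟩ : ∃ b : V, b ≠ u' ∧ b ≠ v' := by
    by_contra hcon
    push_neg at hcon
    have hsub : (Finset.univ : Finset V) ⊆ {u', v'} := by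
      intro z _
      rcases Classical.em (z = u') with h | h
      · simp [h]
      · simp [hcon z h]
    have := Finset.card_le_card hsub
    have h2 : ({u', v'} : Finset V).card ≤ 2 :=
      (Finset.card_insert_le _ _).trans (by simp)
    rw [Finset.card_univ] at this
    omega
  -- Step 2: remove (u',1) and (v',1)
  set S : Finset (V × Fin 3) := {(u', 1), (v', 1)} with hS
  have hSc : S.card < 3 := by
    have : S.card ≤ 2 := (Finset.card_insert_le _ _).trans (by simp)
    omega
  have hc2 := hconn S hSc
  obtain ⟨w1, hw1s⟩ := get_walk hc2 (p := (b, 0)) (q := (b, 1))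
    (by simp [hS, Prod.ext_iff]) (by simp [hS, Prod.ext_iff, hbu, hbv])
  have hw1odd : Odd w1.length := by
    rw [← Nat.not_even_iff_odd]
    intro hev
    have := (tensor_parity w1).mpr hev
    simp at this
  obtain ⟨w2, hw2len⟩ := tensor_avoid u' v' w1 (by
    intro r hr
    have := hw1s r hr
    rw [hS] at this
    simp only [Finset.mem_insert, Finset.mem_singleton] at this
    push_neg at this
    exact this)
  have hw2odd : Odd w2.length := by rw [hw2len]; exact hw1odd
  obtain ⟨y, c0, hc0cyc, hc0odd⟩ :=
    oddClosedWalk_oddCycle w2.length hw2odd b w2 rfl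
  have hsub : ∀ e ∈ c0.edges, e ∈ H.edgeSet := by
    intro e he'
    have := c0.edges_subset_edgeSet he'
    rw [SimpleGraph.edgeSet_deleteEdges] at this
    exact this.1
  refine ⟨x, y, c, c0.transfer H hsub, hc, hc0cyc.transfer hsub, hcodd, ?_, ?_⟩
  · rw [SimpleGraph.Walk.length_transfer]; exact hc0odd
  · have hedges : (c0.transfer H hsub).edges = c0.edges := c0.edges_transfer hsub
    intro hset
    have hmem : s(u', v') ∈ {e | e ∈ (c0.transfer H hsub).edges} := hset ▸ he
    rw [Set.mem_setOf_eq, hedges] at hmem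
    have := c0.edges_subset_edgeSet hmem
    rw [SimpleGraph.edgeSet_deleteEdges] at this
    exact this.2 rfl
end

section
/- The Kronecker product of an odd cycle with the path P₃ is not 3-connected. -/
open SimpleGraph

/-- The Kronecker product of an odd cycle with `P₃` is not 3-connected. -/
theorem stmt16 (m : ℕ) (hm : Odd m) (h3m : 3 ≤ m) :
    ¬ KConnected 3 (tensorProd (SimpleGraph.cycleGraph m) P3) := by
  obtain ⟨n, rfl⟩ : ∃ n, m = n + 2 := ⟨m - 2, by omega⟩
  rintro ⟨-, hconn⟩
  set s : Finset (Fin (n + 2) × Fin 3) := {((1 : Fin (n + 2)), (1 : Fin 3)),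
    ((-1 : Fin (n + 2)), (1 : Fin 3))} with hs
  have hcard : s.card < 3 := by
    calc s.card ≤ _ + 1 := Finset.card_insert_le _ _
    _ ≤ 2 := by simp
    _ < 3 := by norm_num
  have h := (hconn s hcard).preconnected
  have h00 : ((0 : Fin (n+2)), (0 : Fin 3)) ∈ ((↑s : Set _)ᶜ) := by
    simp only [hs, Set.mem_compl_iff, Finset.coe_insert, Finset.coe_singleton,
      Set.mem_insert_iff, Set.mem_singleton_iff, Prod.mk.injEq, not_or]
    exact ⟨fun h => by simpa using h.2, fun h => by simpa using h.2⟩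
  have h02 : ((0 : Fin (n+2)), (2 : Fin 3)) ∈ ((↑s : Set _)ᶜ) := by
    simp only [hs, Set.mem_compl_iff, Finset.coe_insert, Finset.coe_singleton,
      Set.mem_insert_iff, Set.mem_singleton_iff, Prod.mk.injEq, not_or]
    refine ⟨fun h => ?_, fun h => ?_⟩ <;> exact absurd h.2 (by decide)
  obtain ⟨w⟩ := h ⟨_, h00⟩ ⟨_, h02⟩
  cases w with
  | cons hadj w' =>
    rename_i b
    obtain ⟨hcyc, hpath⟩ := hadj
    simp only [Function.Embedding.coe_subtype] at hcyc hpath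
    have hb1 : (b.val).2 = 1 := by
      have := (SimpleGraph.pathGraph_adj).mp hpath
      simp only [Fin.val_zero] at this
      have h2 := (b.val).2.isLt
      exact Fin.ext (by omega)
    have hbfst : (b.val).1 = 1 ∨ (b.val).1 = -1 := by
      have := (SimpleGraph.cycleGraph_adj).mp hcyc
      rcases this with h1 | h1
      · right; open Fin.CommRing in linear_combination -h1
      · left; open Fin.CommRing in linear_combination h1
    have hmem : b.val ∈ (↑s : Set (Fin (n+2) × Fin 3)) := by
      simp only [hs, Finset.coe_insert, Finset.coe_singleton, Set.mem_insert_iff,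
        Set.mem_singleton_iff]
      rcases hbfst with h1 | h1
      · left; exact Prod.ext h1 hb1
      · right; exact Prod.ext h1 hb1
    exact b.prop hmem
end

section
/- If H is a graph with a cut vertex a, and H₁ is a connected component of H − a such that the subgraph of H induced on V(H₁) ∪ {a} is bipartite, then H ∧ P₃ is not 3-connected. -/
open SimpleGraph

/-- If `a` is a cut vertex of `H` and `H₁` is a connected component of `H - a`
such that the subgraph of `H` induced on `V(H₁) ∪ {a}` is bipartite, then
`H ∧ P₃` is not 3-connected. -/
theorem stmt17 {V : Type*} [Fintype V] (H : SimpleGraph V) (a : V)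
    (hcut : ¬ (H.induce ({a}ᶜ : Set V)).Connected)
    (K : (H.induce ({a}ᶜ : Set V)).ConnectedComponent)
    (hbip : (H.induce (Subtype.val '' K.supp ∪ {a})).Colorable 2) :
    ¬ KConnected 3 (tensorProd H P3) := by
  classical
  rintro ⟨-, hconn⟩
  obtain ⟨c⟩ := hbip
  set S : Set V := Subtype.val '' K.supp ∪ {a} with hSdef
  have ha : a ∈ S := Set.mem_union_right _ rfl
  set ca := c ⟨a, ha⟩ with hca
  -- representative of K
  obtain ⟨v0, hv0⟩ := Quot.exists_rep K
  have hv0K : v0 ∈ K.supp := by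
    rw [ConnectedComponent.mem_supp_iff]; exact hv0
  have hv0S : (v0 : V) ∈ S := Set.mem_union_left _ ⟨v0, hv0K, rfl⟩
  have hv0a : (v0 : V) ≠ a := v0.2
  -- a vertex outside K
  have hne : Nonempty ({a}ᶜ : Set V) := ⟨v0⟩
  have hnotpre : ¬ (H.induce ({a}ᶜ : Set V)).Preconnected := fun h => hcut ⟨h⟩
  rw [Preconnected] at hnotpre
  push_neg at hnotpre
  obtain ⟨u1, u2, hu12⟩ := hnotpre
  obtain ⟨z, hz⟩ : ∃ z : ({a}ᶜ : Set V), z ∉ K.supp := by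
    by_cases h1 : u1 ∈ K.supp
    · refine ⟨u2, fun h2 => hu12 ?_⟩
      rw [ConnectedComponent.mem_supp_iff] at h1 h2
      exact ConnectedComponent.exact (h1.trans h2.symm)
    · exact ⟨u1, h1⟩
  -- helper: P3 adjacency
  have hP3 : ∀ i j : Fin 3, P3.Adj i j →
      (i = 1 ∧ (j = 0 ∨ j = 2)) ∨ (j = 1 ∧ (i = 0 ∨ i = 2)) := by
    intro i j h
    rw [P3, pathGraph_adj] at h
    fin_cases i <;> fin_cases j <;> simp_all
  -- helper: component closure
  have F1 : ∀ v u : V, v ∈ Subtype.val '' K.supp → H.Adj v u →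
      u = a ∨ u ∈ Subtype.val '' K.supp := by
    rintro v u ⟨⟨v', hv'⟩, hvK, rfl⟩ hadj
    by_cases hu : u = a
    · exact Or.inl hu
    · right
      have hu' : u ∈ ({a}ᶜ : Set V) := hu
      have hadj' : (H.induce ({a}ᶜ : Set V)).Adj ⟨v', hv'⟩ ⟨u, hu'⟩ := hadj
      refine ⟨⟨u, hu'⟩, ?_, rfl⟩
      rw [ConnectedComponent.mem_supp_iff] at hvK ⊢
      rw [← hvK]
      exact ConnectedComponent.sound hadj'.symm.reachable
  -- helper: proper coloring
  have F2 : ∀ (u v : V) (hu : u ∈ S) (hv : v ∈ S), H.Adj u v →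
      c ⟨u, hu⟩ ≠ c ⟨v, hv⟩ := by
    intro u v hu hv h
    exact c.valid (show (H.induce S).Adj ⟨u, hu⟩ ⟨v, hv⟩ from h)
  have fin2 : ∀ x y z : Fin 2, x ≠ y → y ≠ z → x = z := by decide
  -- the cut set
  set s : Finset (V × Fin 3) := {(a, (0 : Fin 3)), (a, 2)} with hs
  have hcard : s.card < 3 := by
    calc s.card ≤ 1 + 1 := by
          rw [hs]; exact (Finset.card_insert_le _ _).trans (by simp)
      _ < 3 := by omega
  have hC := hconn s hcard
  set T : Set (V × Fin 3) := ((↑s : Set (V × Fin 3)))ᶜ with hT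
  -- the invariant set
  set W : Set (V × Fin 3) := {p | ∃ hv : p.1 ∈ S,
      (p.2 = 1 ∧ c ⟨p.1, hv⟩ ≠ ca) ∨
      ((p.2 = 0 ∨ p.2 = 2) ∧ c ⟨p.1, hv⟩ = ca ∧ p.1 ≠ a)} with hW
  -- start vertex
  obtain ⟨p, hpT, hpW⟩ : ∃ p : V × Fin 3, p ∈ T ∧ p ∈ W := by
    by_cases hcol : c ⟨(v0 : V), hv0S⟩ = ca
    · refine ⟨((v0 : V), 0), ?_, ⟨hv0S, Or.inr ⟨Or.inl rfl, hcol, hv0a⟩⟩⟩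
      simp [hT, hs, Prod.ext_iff, hv0a]
    · refine ⟨((v0 : V), 1), ?_, ⟨hv0S, Or.inl ⟨rfl, hcol⟩⟩⟩
      simp [hT, hs, Prod.ext_iff, hv0a]
  -- end vertex
  have hza : (z : V) ≠ a := z.2
  have hqT : ((z : V), (1 : Fin 3)) ∈ T := by
    simp [hT, hs, Prod.ext_iff]
  have hqW : ((z : V), (1 : Fin 3)) ∉ W := by
    rintro ⟨hvS, h | h⟩
    · rcases hvS with ⟨z', hz', hval⟩ | hmem
      · exact hz (by rwa [show z' = z from Subtype.ext hval] at hz')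
      · exact hza hmem
    · rcases h.1 with h0 | h2
      · exact (by decide : (1 : Fin 3) ≠ 0) h0
      · exact (by decide : (1 : Fin 3) ≠ 2) h2
  -- invariant preserved by edges
  have inv : ∀ x y : T, ((tensorProd H P3).induce T).Adj x y →
      (x : V × Fin 3) ∈ W → (y : V × Fin 3) ∈ W := by
    rintro x y hxy ⟨hxS, hcase⟩
    have hadj : (tensorProd H P3).Adj x.val y.val := hxy
    obtain ⟨hH, hP⟩ := hadj
    have hyT : (y : V × Fin 3) ∈ T := y.2
    rcases hcase with ⟨hi1, hcne⟩ | ⟨hi02, hceq, hune⟩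
    · -- middle layer, color ≠ ca
      have hua : x.val.1 ≠ a := by
        intro h
        exact hcne (by rw [show (⟨x.val.1, hxS⟩ : S) = ⟨a, ha⟩ from Subtype.ext h])
      have huK : x.val.1 ∈ Subtype.val '' K.supp := by
        rcases hxS with h | h
        · exact h
        · exact absurd h hua
      have hj : y.val.2 = 0 ∨ y.val.2 = 2 := by
        rcases hP3 _ _ hP with ⟨_, hj⟩ | ⟨_, hi⟩
        · exact hj
        · rcases hi with h | h <;> rw [hi1] at h <;> exact absurd h (by decide)
      rcases F1 _ _ huK hH with hwa | hwK
      · exfalso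
        apply hyT
        rcases hj with h0 | h2
        · rw [hs]; simp [Prod.ext_iff, hwa, h0]
        · rw [hs]; simp [Prod.ext_iff, hwa, h2]
      · have hwS : y.val.1 ∈ S := Set.mem_union_left _ hwK
        have hwa : y.val.1 ≠ a := by
          obtain ⟨w', hw', hval⟩ := hwK
          rw [← hval]; exact w'.2
        refine ⟨hwS, Or.inr ⟨hj, ?_, hwa⟩⟩
        exact fin2 _ _ _ (F2 _ _ hwS hxS hH.symm) hcne
    · -- outer layer, color = ca
      have huK : x.val.1 ∈ Subtype.val '' K.supp := by
        rcases hxS with h | h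
        · exact h
        · exact absurd h hune
      have hj1 : y.val.2 = 1 := by
        rcases hP3 _ _ hP with ⟨hi, _⟩ | ⟨hj, _⟩
        · rcases hi02 with h | h <;> rw [hi] at h <;> exact absurd h (by decide)
        · exact hj
      rcases F1 _ _ huK hH with hwa | hwK
      · exfalso
        have := F2 _ _ hxS ha (by rwa [hwa] at hH)
        exact this (hceq.trans (by rfl))
      · have hwS : y.val.1 ∈ S := Set.mem_union_left _ hwK
        refine ⟨hwS, Or.inl ⟨hj1, ?_⟩⟩
        intro hwca
        exact F2 _ _ hxS hwS hH (hceq.trans hwca.symm)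
  -- transport along walks
  have key : ∀ (x y : T) (w : ((tensorProd H P3).induce T).Walk x y),
      (x : V × Fin 3) ∈ W → (y : V × Fin 3) ∈ W := by
    intro x y w
    induction w with
    | nil => exact id
    | cons h _ ih => exact fun hx => ih (inv _ _ h hx)
  obtain ⟨wk⟩ := hC.preconnected ⟨p, hpT⟩ ⟨((z : V), (1 : Fin 3)), hqT⟩
  exact hqW (key _ _ wk hpW)
end
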